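/- Cycle lemma for a single frequency: let n ≥ 1, let σ ∈ S_n be a permutation with m(σ) cycles (orbits on {1, …, n}, counting fixed points), and let f : ℝⁿ → ℝ be a bounded measurable function with compact support. Then lim_{ω → ∞} ∫_{ℝⁿ} ( ∏_{i=1}^n cos(ω(x_{σ(i)} − x_i)) ) f(x₁, …, x_n) dx₁ ⋯ dx_n = (1/2)^{n − m(σ)} ∫_{ℝⁿ} f(x₁, …, x_n) dx₁ ⋯ dx_n, the limit being over real ω → ∞. -/

import Mathlib

/-!
Writing `cos θ = (e^{iθ} + e^{-iθ}) / 2` and expanding the product, the integrand becomes `2^{-n}`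
times a sum over subsets `t ⊆ {1, …, n}` of `e^{iω L_t(x)} f(x)`, where
`L_t(x) = ∑ᵢ ±(x_{σ i} - x_i)` with sign `+` exactly for `i ∈ t`. The linear form `L_t` vanishes
precisely when `t` is a union of cycles of `σ`; there are `2^{m(σ)}` such `t`, each contributing
`∫ f`, while every other term tends to `0` by the Riemann–Lebesgue lemma.
-/

open Filter MeasureTheory

/-- The setoid on `Fin n` whose classes are the cycles (orbits) of a permutation `σ`,
counting fixed points as singleton orbits. -/
def sameCycleSetoid {n : ℕ} (σ : Equiv.Perm (Fin n)) : Setoid (Fin n) :=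
  ⟨σ.SameCycle, ⟨fun x => Equiv.Perm.SameCycle.refl σ x,
    fun h => h.symm, fun h h' => h.trans h'⟩⟩

/-- `cycleCount σ` is the number of cycles `m(σ)` of the permutation `σ`. -/
noncomputable def cycleCount {n : ℕ} (σ : Equiv.Perm (Fin n)) : ℕ :=
  Nat.card (Quotient (sameCycleSetoid σ))

open Complex Finset

section SignedSums

variable {ι : Type*} [Fintype ι] [DecidableEq ι]

def subsetSign (t : Finset ι) (i : ι) : ℝ := if i ∈ t then 1 else -1

omit [Fintype ι] in
theorem subsetSign_eq_subsetSign_iff {t : Finset ι} {i j : ι} :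
    subsetSign t i = subsetSign t j ↔ (i ∈ t ↔ j ∈ t) := by
  unfold subsetSign
  split_ifs <;> norm_num <;> tauto

theorem sum_subsetSign_mul (t : Finset ι) (θ : ι → ℝ) :
    ∑ i, subsetSign t i * θ i = ∑ i ∈ t, θ i + ∑ i ∈ univ \ t, -θ i := by
  rw [← sum_sdiff (subset_univ t), add_comm (∑ i ∈ univ \ t, _)]
  congr 1 <;> refine sum_congr rfl fun i hi => ?_
  · simp [subsetSign, hi]
  · simp [subsetSign, (Finset.mem_sdiff.1 hi).2]

theorem prod_cos_eq_sum_exp (θ : ι → ℝ) :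
    ((∏ i, Real.cos (θ i) : ℝ) : ℂ) =
      (1 / 2) ^ Fintype.card ι * ∑ t : Finset ι, exp (↑(∑ i, subsetSign t i * θ i) * I) := by
  have two_cos (z : ℂ) : cos z = 2⁻¹ * (exp (z * I) + exp (-z * I)) := by
    rw [Complex.cos, div_eq_inv_mul]
  simp_rw [ofReal_prod, ofReal_cos, two_cos, prod_mul_distrib, prod_const, card_univ, prod_add,
    ← exp_sum, ← exp_add, ← powerset_univ, one_div, sum_subsetSign_mul]
  push_cast
  simp_rw [add_mul, sum_mul]

end SignedSums

section SignedDisplacement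

variable {ι : Type*} [Fintype ι] [DecidableEq ι] (σ : Equiv.Perm ι) (t : Finset ι)

def signedDisplacement : StrongDual ℝ (ι → ℝ) :=
  ∑ i, subsetSign t i •
    (ContinuousLinearMap.proj (R := ℝ) (φ := fun _ : ι => ℝ) (σ i) -
      ContinuousLinearMap.proj (R := ℝ) (φ := fun _ : ι => ℝ) i)

theorem signedDisplacement_apply (x : ι → ℝ) :
    signedDisplacement σ t x = ∑ i, subsetSign t i * (x (σ i) - x i) := by
  simp [signedDisplacement]

theorem signedDisplacement_eq_zero_iff :
    signedDisplacement σ t = 0 ↔ ∀ i, σ i ∈ t ↔ i ∈ t := by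
  constructor
  · intro h i
    have hsingle := congrArg (· (Pi.single (σ i) 1)) h
    simp only [signedDisplacement_apply, Pi.single_apply, σ.injective.eq_iff, mul_sub, mul_ite,
      mul_one, mul_zero, sum_sub_distrib, sum_ite_eq', mem_univ, if_true, zero_apply,
      sub_eq_zero] at hsingle
    exact (subsetSign_eq_subsetSign_iff.1 hsingle).symm
  · intro ht
    ext x
    have hsign (i : ι) : subsetSign t (σ i) = subsetSign t i :=
      subsetSign_eq_subsetSign_iff.2 (ht i)
    have hreindex : ∑ i, subsetSign t i * x (σ i) = ∑ i, subsetSign t i * x i :=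
      calc ∑ i, subsetSign t i * x (σ i) = ∑ i, subsetSign t (σ i) * x (σ i) := by
            simp only [hsign]
        _ = ∑ i, subsetSign t i * x i := Equiv.sum_comp σ fun j => subsetSign t j * x j
    simp [signedDisplacement_apply, mul_sub, hreindex]

end SignedDisplacement

theorem tendsto_integral_exp_mul_smul_atTop_of_ne_zero {V E : Type*} [NormedAddCommGroup V]
    [NormedSpace ℝ V] [FiniteDimensional ℝ V] [MeasurableSpace V] [BorelSpace V]
    [NormedAddCommGroup E] [NormedSpace ℂ E] (μ : Measure V) [μ.IsAddHaarMeasure] (f : V → E)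
    {L : StrongDual ℝ V} (hL : L ≠ 0) :
    Tendsto (fun ω : ℝ => ∫ v, exp (↑(ω * L v) * I) • f v ∂μ) atTop (nhds 0) := by
  have hray : Tendsto (fun ω : ℝ => (-(ω / (2 * Real.pi))) • L) atTop (cocompact _) := by
    rw [← Metric.cobounded_eq_cocompact, ← tendsto_norm_atTop_iff_cobounded]
    simp_rw [norm_smul, norm_neg, Real.norm_eq_abs]
    exact (tendsto_abs_atTop_atTop.comp (tendsto_id.atTop_div_const Real.two_pi_pos))
      |>.atTop_mul_const (norm_pos_iff.2 hL)
  refine ((tendsto_integral_exp_smul_cocompact f μ).comp hray).congr fun ω => ?_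
  refine integral_congr_ae (ae_of_all _ fun v => ?_)
  simp only [FunLike.coe_smul, Pi.smul_apply, smul_eq_mul, Circle.smul_def,
    Real.fourierChar_apply]
  congr 3
  field_simp

theorem tendsto_integral_exp_signedDisplacement_mul {ι : Type*} [Fintype ι] [DecidableEq ι]
    (σ : Equiv.Perm ι) (t : Finset ι) (f : (ι → ℝ) → ℂ) :
    Tendsto (fun ω : ℝ => ∫ x, exp (↑(ω * signedDisplacement σ t x) * I) * f x) atTop
      (nhds (if ∀ i, σ i ∈ t ↔ i ∈ t then ∫ x, f x else 0)) := by
  split_ifs with ht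
  · simp [(signedDisplacement_eq_zero_iff σ t).2 ht]
  · simpa only [smul_eq_mul] using tendsto_integral_exp_mul_smul_atTop_of_ne_zero volume f
      (mt (signedDisplacement_eq_zero_iff σ t).1 ht)

theorem integral_prod_cos_mul_eq_sum {ι : Type*} [Fintype ι] [DecidableEq ι]
    (σ : Equiv.Perm ι) {f : (ι → ℝ) → ℝ} (hf : Integrable f) (ω : ℝ) :
    ((∫ x, (∏ i, Real.cos (ω * (x (σ i) - x i))) * f x : ℝ) : ℂ) =
      (1 / 2) ^ Fintype.card ι *
        ∑ t : Finset ι, ∫ x, exp (↑(ω * signedDisplacement σ t x) * I) * f x := by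
  have hterm (t : Finset ι) :
      Integrable fun x => exp (↑(ω * signedDisplacement σ t x) * I) * f x :=
    hf.ofReal.bdd_mul (c := 1) (by fun_prop) (ae_of_all _ fun x => (norm_exp_ofReal_mul_I _).le)
  have hpointwise (x : ι → ℝ) : (((∏ i, Real.cos (ω * (x (σ i) - x i))) * f x : ℝ) : ℂ) =
      (1 / 2) ^ Fintype.card ι *
        ∑ t : Finset ι, exp (↑(ω * signedDisplacement σ t x) * I) * f x := by
    simp_rw [signedDisplacement_apply, mul_sum, mul_left_comm ω]
    rw [ofReal_mul, prod_cos_eq_sum_exp, mul_assoc, sum_mul, mul_sum]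
  rw [← integral_complex_ofReal, integral_congr_ae (ae_of_all _ hpointwise), integral_const_mul,
    integral_finsetSum _ fun t _ => hterm t]

section CycleCount

theorem Equiv.Perm.SameCycle.mem_of_mapsTo {α : Type*} [Finite α] {σ : Equiv.Perm α}
    {s : Set α} (hs : Set.MapsTo σ s s) {a b : α} (h : σ.SameCycle a b) (ha : a ∈ s) : b ∈ s := by
  obtain ⟨k, -, rfl⟩ := h.exists_pow_eq'
  rw [Equiv.Perm.coe_pow]
  exact hs.iterate k ha

variable {n : ℕ} (σ : Equiv.Perm (Fin n))

theorem cycleCount_le : cycleCount σ ≤ n := by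
  simpa [cycleCount] using
    Nat.card_le_card_of_surjective _ (Quotient.mk_surjective (s := sameCycleSetoid σ))

theorem card_invariant_finset_eq_two_pow_cycleCount :
    #{t : Finset (Fin n) | ∀ i, σ i ∈ t ↔ i ∈ t} = 2 ^ cycleCount σ := by
  classical
  let _ : Fintype (Quotient (sameCycleSetoid σ)) := Fintype.ofFinite _
  let q := Quotient.mk (sameCycleSetoid σ)
  have hq (i : Fin n) : q (σ i) = q i :=
    Quotient.sound (Equiv.Perm.sameCycle_apply_left.2 (Equiv.Perm.SameCycle.refl σ i))
  rw [cycleCount, Nat.card_eq_fintype_card, ← Fintype.card_finset, ← card_univ]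
  refine card_bij' (fun t _ => t.image q) (fun c _ => ({i | q i ∈ c} : Finset (Fin n)))
    (fun _ _ => mem_univ _) (fun c _ => by simp [hq]) (fun t ht => ?_) (fun c _ => ?_)
  · simp only [mem_filter, mem_univ, true_and] at ht
    ext i
    simp only [mem_filter, mem_univ, true_and, mem_image]
    refine ⟨fun ⟨a, ha, hai⟩ => ?_, fun hi => ⟨i, hi, rfl⟩⟩
    exact Equiv.Perm.SameCycle.mem_of_mapsTo (s := (t : Set (Fin n))) (fun j hj => (ht j).2 hj)
      (Quotient.exact hai) ha
  · ext c'
    obtain ⟨i, rfl⟩ := Quotient.mk_surjective c'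
    simp only [mem_image, mem_filter, mem_univ, true_and]
    exact ⟨fun ⟨a, ha, hai⟩ => hai ▸ ha, fun hi => ⟨i, hi, rfl⟩⟩

end CycleCount

theorem tendsto_integral_prod_cos_mul {n : ℕ} (σ : Equiv.Perm (Fin n)) {f : (Fin n → ℝ) → ℝ}
    (hf : Integrable f) :
    Tendsto (fun ω : ℝ => ∫ x : Fin n → ℝ, (∏ i, Real.cos (ω * (x (σ i) - x i))) * f x)
      atTop (nhds ((1 / 2 : ℝ) ^ (n - cycleCount σ) * ∫ x : Fin n → ℝ, f x)) := by
  have hlimit : (1 / 2 : ℂ) ^ n * ∑ t : Finset (Fin n),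
      (if ∀ i, σ i ∈ t ↔ i ∈ t then ∫ x, (f x : ℂ) else 0) =
        (((1 / 2 : ℝ) ^ (n - cycleCount σ) * ∫ x, f x : ℝ) : ℂ) := by
    have hscalar : (1 / 2 : ℝ) ^ n * 2 ^ cycleCount σ = (1 / 2) ^ (n - cycleCount σ) :=
      calc (1 / 2 : ℝ) ^ n * 2 ^ cycleCount σ
          = (1 / 2) ^ (n - cycleCount σ) * ((1 / 2) ^ cycleCount σ * 2 ^ cycleCount σ) := by
            rw [← mul_assoc, ← pow_add, Nat.sub_add_cancel (cycleCount_le σ)]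
        _ = (1 / 2) ^ (n - cycleCount σ) := by rw [← mul_pow]; norm_num
    rw [sum_ite, sum_const_zero, add_zero, sum_const, card_invariant_finset_eq_two_pow_cycleCount,
      nsmul_eq_mul, integral_complex_ofReal, ← mul_assoc, ← hscalar]
    push_cast
    ring
  rw [← tendsto_ofReal_iff, ← hlimit]
  simp_rw [integral_prod_cos_mul_eq_sum σ hf, Fintype.card_fin]
  refine Tendsto.const_mul _ (tendsto_finsetSum _ fun t _ => ?_)
  -- the two `if`s differ only in their `Decidable` instances
  convert tendsto_integral_exp_signedDisplacement_mul σ t fun x => (f x : ℂ)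

theorem cycle_lemma_single_frequency_general (n : ℕ) (σ : Equiv.Perm (Fin n))
    (f : (Fin n → ℝ) → ℝ) (hmeas : Measurable f) (hbd : ∃ C : ℝ, ∀ x, |f x| ≤ C)
    (hsupp : HasCompactSupport f) :
    Tendsto (fun ω : ℝ =>
        ∫ x : Fin n → ℝ, (∏ i, Real.cos (ω * (x (σ i) - x i))) * f x)
      atTop (nhds ((1 / 2 : ℝ) ^ (n - cycleCount σ) * ∫ x : Fin n → ℝ, f x)) := by
  obtain ⟨C, hC⟩ := hbd
  have hf : Integrable f := (integrableOn_iff_integrable_of_support_subset (subset_tsupport f)).1 <|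
    Measure.integrableOn_of_bounded hsupp.measure_lt_top.ne hmeas.aestronglyMeasurable
      (ae_of_all _ hC)
  exact tendsto_integral_prod_cos_mul σ hf

/-- Cycle lemma for a single frequency: for a permutation `σ` with `m(σ)` cycles and `f`
bounded, measurable, compactly supported,
`∫ (∏ i cos(ω(x_{σ(i)} − x_i))) f(x) dx → (1/2)^(n − m(σ)) ∫ f(x) dx` as `ω → ∞`. -/
theorem cycle_lemma_single_frequency (n : ℕ) (hn : 1 ≤ n) (σ : Equiv.Perm (Fin n))
    (f : (Fin n → ℝ) → ℝ) (hmeas : Measurable f) (hbd : ∃ C : ℝ, ∀ x, |f x| ≤ C)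
    (hsupp : HasCompactSupport f) :
    Tendsto (fun ω : ℝ =>
        ∫ x : Fin n → ℝ, (∏ i, Real.cos (ω * (x (σ i) - x i))) * f x)
      atTop (nhds ((1 / 2 : ℝ) ^ (n - cycleCount σ) * ∫ x : Fin n → ℝ, f x)) :=
  cycle_lemma_single_frequency_general n σ f hmeas hbd hsupp
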